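/- arXiv:2403.15580 — 2 statements merged into one kernel-verified Lean document; each statement's English description precedes it below -/
import Mathlib

section
/- Let L be a ring, X a left L-module, N a positive natural number, and f_1, …, f_m : X → X finitely many L-linear endomorphisms of X. Then the following are equivalent: (i) for every choice of indices i_1, …, i_N ∈ {1, …, m} the composite f_{i_N} ∘ f_{i_{N-1}} ∘ ⋯ ∘ f_{i_1} is the zero map; (ii) there exists a chain of L-submodules 0 = X_0 ⊆ X_1 ⊆ ⋯ ⊆ X_N = X such that f_r(X_i) ⊆ X_{i-1} for all 1 ≤ r ≤ m and all 1 ≤ i ≤ N. (For the forward direction one may take X_i to be the sum of the images of all composites of at least N−i of the maps f_1, …, f_m, together with X itself for i = N.) -/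
/-- Let `L` be a ring, `X` a left `L`-module, `N` a positive natural
number and `f 1, …, f m : X → X` finitely many `L`-linear endomorphisms of `X`.
Then every composite of `N` of the maps `f r` is zero if and only if there is a chain
of submodules `⊥ = c 0 ≤ c 1 ≤ ⋯ ≤ c N = ⊤` with `f r (c i) ⊆ c (i-1)` for all
`1 ≤ r ≤ m` and `1 ≤ i ≤ N`. -/
theorem triangular_iff_exists_filtration
    {L : Type*} [Ring L] {X : Type*} [AddCommGroup X] [Module L X]
    {m : ℕ} (f : Fin m → Module.End L X) (N : ℕ) (hN : 0 < N) :
    (∀ i : Fin N → Fin m, (List.ofFn fun k => f (i k)).prod = 0) ↔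
      ∃ c : Fin (N + 1) → Submodule L X,
        c 0 = ⊥ ∧ c (Fin.last N) = ⊤ ∧
        (∀ i : Fin N, c i.castSucc ≤ c i.succ) ∧
        (∀ (r : Fin m) (i : Fin N), (c i.succ).map (f r) ≤ c i.castSucc) := by
  constructor
  · intro h
    refine ⟨fun j => ⨅ w : Fin (j : ℕ) → Fin m,
      LinearMap.ker ((List.ofFn fun k => f (w k)).prod), ?_, ?_, ?_, ?_⟩
    · apply le_antisymm
      · intro x hx
        have := (Submodule.mem_iInf _).mp hx Fin.elim0
        simpa using this
      · exact bot_le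
    · apply le_antisymm le_top
      intro x _
      simp only [Submodule.mem_iInf, LinearMap.mem_ker]
      intro w
      have : ((Fin.last N : Fin (N+1)) : ℕ) = N := rfl
      rw [show ((List.ofFn fun k => f (w k)).prod) = 0 from h (fun k => w (Fin.cast this.symm k)) ▸ ?_]
      · simp
      · congr 1
    · intro i x hx
      simp only [Submodule.mem_iInf, LinearMap.mem_ker] at hx ⊢
      intro w
      have h1 : ((i.succ : Fin (N+1)) : ℕ) = (i : ℕ) + 1 := rfl
      have h2 : ((i.castSucc : Fin (N+1)) : ℕ) = (i : ℕ) := rfl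
      -- w : Fin (i+1) → Fin m ; split off head
      have := hx (fun k => w (Fin.cast h1.symm k.succ))
      have hl : (List.ofFn fun k : Fin ((i.succ : Fin (N+1)) : ℕ) => f (w k)).prod
          = f (w ⟨0, by simp [h1]⟩) * (List.ofFn fun k : Fin (i : ℕ) => f (w (Fin.cast h1.symm k.succ))).prod := by
        rw [List.ofFn_succ, List.prod_cons]
        rfl
      rw [hl]
      simp only [Module.End.mul_apply]
      rw [show (List.ofFn fun k : Fin (i : ℕ) => f (w (Fin.cast h1.symm k.succ))).prod x = 0 from this]
      simp
    · intro r i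
      rw [Submodule.map_le_iff_le_comap]
      intro x hx
      simp only [Submodule.mem_comap, Submodule.mem_iInf, LinearMap.mem_ker] at hx ⊢
      intro w
      have h1 : ((i.succ : Fin (N+1)) : ℕ) = (i : ℕ) + 1 := rfl
      have h2 : ((i.castSucc : Fin (N+1)) : ℕ) = (i : ℕ) := rfl
      -- consider snoc w r
      have := hx (fun k : Fin ((i.succ : Fin (N+1)) : ℕ) => (Fin.snoc (fun j : Fin (i:ℕ) => w (Fin.cast h2.symm j)) r : Fin ((i:ℕ)+1) → Fin m) (Fin.cast h1 k))
      have hl : (List.ofFn fun k : Fin ((i.succ : Fin (N+1)) : ℕ) =>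
            f ((Fin.snoc (fun j : Fin (i:ℕ) => w (Fin.cast h2.symm j)) r : Fin ((i:ℕ)+1) → Fin m) (Fin.cast h1 k))).prod
          = (List.ofFn fun k : Fin ((i.castSucc : Fin (N+1)) : ℕ) => f (w k)).prod * f r := by
        have : ((i.succ : Fin (N+1)) : ℕ) = (i : ℕ) + 1 := rfl
        rw [List.ofFn_succ']
        rw [List.concat_eq_append, List.prod_append, List.prod_singleton]
        congr 1
        · congr 1
          apply List.ext_getElem
          · simp
          · intro n hn1 hn2
            simp only [List.getElem_ofFn]
            congr 1
            simp only [List.length_ofFn] at hn2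
            simp only [Fin.snoc, Fin.coe_castSucc, Fin.coe_cast, Fin.is_lt, dite_true]
            simp only [show n < (i:ℕ) from hn2, dite_true, Fin.castLT]
            exact congrArg w (Fin.ext rfl)
        · rw [show Fin.cast h1 (Fin.last _) = Fin.last (i:ℕ) from rfl, Fin.snoc_last]
      rw [hl] at this
      simpa using this
  · rintro ⟨c, hc0, hcN, hmono, hmap⟩ w
    -- key lemma
    have key : ∀ n (hn : n ≤ N) (v : Fin n → Fin m) (x : X),
        x ∈ c ⟨n, by omega⟩ → (List.ofFn fun k => f (v k)).prod x = 0 := by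
      intro n
      induction n with
      | zero =>
        intro hn v x hx
        rw [show (⟨0, by omega⟩ : Fin (N+1)) = 0 from rfl, hc0, Submodule.mem_bot] at hx
        simp [hx]
      | succ n ih =>
        intro hn v x hx
        have hi : n < N := by omega
        set i : Fin N := ⟨n, hi⟩
        have hx' : f (v (Fin.last n)) x ∈ c ⟨n, by omega⟩ := by
          have : f (v (Fin.last n)) x ∈ (c i.succ).map (f (v (Fin.last n))) := by
            refine Submodule.mem_map_of_mem ?_
            convert hx using 2
            rfl
          have := hmap (v (Fin.last n)) i this
          convert this using 2
          rfl
        have := ih (by omega) (fun k => v k.castSucc) _ hx'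
        rw [List.ofFn_succ', List.concat_eq_append, List.prod_append, List.prod_singleton]
        simp only [Module.End.mul_apply]
        exact this
    have hxtop : ∀ x : X, x ∈ c ⟨N, by omega⟩ := by
      intro x
      rw [show (⟨N, by omega⟩ : Fin (N+1)) = Fin.last N from rfl, hcN]
      trivial
    ext x
    simpa using key N le_rfl w x (hxtop x)
end

section
/- Let A be an associative unital ring and let σ, σ' : G → Aut(A) be two actions of a group G on A by ring automorphisms. For g ∈ G, let F_g (respectively F'_g) denote the endofunctor of the category of left A-modules given by restriction of scalars along σ_g^{-1} (respectively (σ'_g)^{-1}); so F_g(M) has action a · m := σ_g^{-1}(a)m and F_g is the identity on underlying maps, and there are canonical identifications F_{gh} = F_g ∘ F_h and F'_{gh} = F'_g ∘ F'_h. Suppose that for each g ∈ G there is a natural isomorphism α_g : F'_g ⟶ F_g such that α_{1_G} is the identity and for all g, h ∈ G the natural isomorphism α_{gh} : F'_g ∘ F'_h ⟶ F_g ∘ F_h equals the composite of the whiskering of α_g with F'_h (with components (α_g)_{F'_h(M)}) followed by the whiskering of F_g with α_h (with components F_g((α_h)_M)). Then there exists a map ρ : G → A^× into the units of A with ρ(1_G)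 = 1, ρ(gh) = ρ(g)·σ_g(ρ(h)) for all g, h ∈ G, and σ'_g(a) = ρ(g)·σ_g(a)·ρ(g)^{-1} for all g ∈ G and a ∈ A. -/
universe u

/-- Let `σ, σ' : G →* RingAut A` be two actions of a group `G` on a
ring `A` by ring automorphisms, and for `g ∈ G` let `F g` (resp. `F' g`) be the
endofunctor of left `A`-modules given by restriction of scalars along `σ g⁻¹`
(resp. `σ' g⁻¹`), acting as the identity on underlying maps.  Suppose for each `g`
there is a natural isomorphism `α g : F' g ⟶ F g` — given here in unbundled form by
its components `α g M : M → M`, which are additive, semilinear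
(`α g M (σ' g⁻¹ a • m) = σ g⁻¹ a • α g M m`), natural with respect to all `A`-linear
maps between the original module structures, and bijective — such that `α 1` is the
identity and `α (g h)` is the composite of the whiskering of `α g` with `F' h`
(components `(α g)_{F' h M}`, i.e. `α g` evaluated at `M` equipped with the module
structure twisted by `σ' h⁻¹`) followed by the whiskering of `F g` with `α h`
(components `F g ((α h)_M) = (α h)_M`).  Then there is a map `ρ : G → Aˣ` with
`ρ 1 = 1`, `ρ (g h) = ρ g · σ g (ρ h)` and `σ' g a = ρ g · σ g a · (ρ g)⁻¹`. -/
theorem weakly_equivariant_identity_gives_cocycle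
    (A : Type u) [Ring A] {G : Type*} [Group G] (σ σ' : G →* RingAut A)
    (α : ∀ (g : G) (M : Type u) [AddCommGroup M] [Module A M], M → M)
    (hadd : ∀ (g : G) (M : Type u) [AddCommGroup M] [Module A M] (m m' : M),
      α g M (m + m') = α g M m + α g M m')
    (hsemi : ∀ (g : G) (M : Type u) [AddCommGroup M] [Module A M] (a : A) (m : M),
      α g M (σ' g⁻¹ a • m) = σ g⁻¹ a • α g M m)
    (hnat : ∀ (g : G) (M N : Type u) [AddCommGroup M] [Module A M] [AddCommGroup N]
      [Module A N] (f : M →ₗ[A] N) (m : M), α g N (f m) = f (α g M m))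
    (hbij : ∀ (g : G) (M : Type u) [AddCommGroup M] [Module A M],
      Function.Bijective (α g M))
    (hone : ∀ (M : Type u) [AddCommGroup M] [Module A M] (m : M), α 1 M m = m)
    (hcoc : ∀ (g h : G) (M : Type u) [iM : AddCommGroup M] [jM : Module A M] (m : M),
      α (g * h) M m
        = α h M (@α g M iM (Module.compHom M (σ' h⁻¹ : A →+* A)) m)) :
    ∃ ρ : G → Aˣ, ρ 1 = 1 ∧
      (∀ g h : G, (ρ (g * h) : A) = (ρ g : A) * σ g (ρ h : A)) ∧
      (∀ (g : G) (a : A), σ' g a = (ρ g : A) * σ g a * ((ρ g)⁻¹ : Aˣ)) := by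
  classical
  -- α g on A is left multiplication by c g := α g A 1
  have key : ∀ (g : G) (b : A), α g A b = α g A 1 * b := by
    intro g b
    have h := hnat g A A (LinearMap.toSpanSingleton A A b) 1
    simpa [smul_eq_mul] using h
  -- intertwining relation
  have comm : ∀ (g : G) (a : A), α g A 1 * σ' g⁻¹ a = σ g⁻¹ a * α g A 1 := by
    intro g a
    have h := hsemi g A a 1
    rwa [smul_eq_mul, smul_eq_mul, mul_one, key] at h
  -- c g is a unit
  have hunit : ∀ g : G, ∃ d : A, α g A 1 * d = 1 ∧ d * α g A 1 = 1 := by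
    intro g
    obtain ⟨d, hd⟩ := (hbij g A).2 1
    rw [key] at hd
    refine ⟨d, hd, (hbij g A).1 ?_⟩
    rw [key, key, mul_one, ← mul_assoc, hd, one_mul]
  let cU : G → Aˣ := fun g => ⟨α g A 1, Classical.choose (hunit g),
    (Classical.choose_spec (hunit g)).1, (Classical.choose_spec (hunit g)).2⟩
  have cU_val : ∀ g, (cU g : A) = α g A 1 := fun g => rfl
  -- value of α g on the twisted module at 1
  have twist : ∀ g h : G,
      @α g A _ (Module.compHom A ((σ' h⁻¹ : RingAut A) : A →+* A)) 1
        = σ' h⁻¹ (α g A 1) := by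
    intro g h
    let f : @LinearMap A A _ _ (RingHom.id A) A A _ _ _
        (Module.compHom A ((σ' h⁻¹ : RingAut A) : A →+* A)) :=
      @LinearMap.mk A A _ _ (RingHom.id A) A A _ _ _
        (Module.compHom A ((σ' h⁻¹ : RingAut A) : A →+* A))
        ⟨⇑(σ' h⁻¹), map_add (σ' h⁻¹)⟩ (fun a m => map_mul (σ' h⁻¹) a m)
    have h1 := @hnat g A A _ _ _
      (Module.compHom A ((σ' h⁻¹ : RingAut A) : A →+* A)) f 1
    calc @α g A _ (Module.compHom A ((σ' h⁻¹ : RingAut A) : A →+* A)) 1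
        = @α g A _ (Module.compHom A ((σ' h⁻¹ : RingAut A) : A →+* A)) (f 1) := by
          rw [show f 1 = (1 : A) from map_one (σ' h⁻¹)]
      _ = f (α g A 1) := h1
      _ = σ' h⁻¹ (α g A 1) := rfl
  -- cocycle relation for c
  have ccoc : ∀ g h : G, α (g * h) A 1 = α h A 1 * σ' h⁻¹ (α g A 1) := by
    intro g h
    have h1 := hcoc g h A 1
    rwa [twist g h, key h] at h1
  have conj : ∀ (g : G) (a : A),
      σ' g a = (((cU g⁻¹)⁻¹ : Aˣ) : A) * σ g a * ((cU g⁻¹ : Aˣ) : A) := by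
    intro g a
    have h := comm g⁻¹ a
    rw [inv_inv] at h
    calc σ' g a = ((cU g⁻¹)⁻¹ : Aˣ) * ((cU g⁻¹ : A) * σ' g a) := by
          rw [← mul_assoc, Units.inv_mul, one_mul]
      _ = ((cU g⁻¹)⁻¹ : Aˣ) * (σ g a * (cU g⁻¹ : A)) := by rw [cU_val, h]
      _ = _ := by rw [mul_assoc]
  refine ⟨fun g => (cU g⁻¹)⁻¹, ?_, ?_, ?_⟩
  · have h1 : cU 1 = 1 := Units.ext (by rw [cU_val, hone]; rfl)
    simp only [inv_one, h1]
  · intro g h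
    have h1 := ccoc h⁻¹ g⁻¹
    rw [inv_inv] at h1
    have hwval : ((Units.map ((σ' g : A ≃+* A) : A →* A) (cU h⁻¹) : Aˣ) : A)
        = σ' g ((cU h⁻¹ : Aˣ) : A) := rfl
    have hmul : cU (g * h)⁻¹ = cU g⁻¹ * Units.map ((σ' g : A ≃+* A) : A →* A) (cU h⁻¹) := by
      apply Units.ext
      rw [Units.val_mul, hwval, cU_val, cU_val, cU_val, mul_inv_rev]
      exact h1
    have hwinv : (((Units.map ((σ' g : A ≃+* A) : A →* A) (cU h⁻¹))⁻¹ : Aˣ) : A)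
        = σ' g (((cU h⁻¹)⁻¹ : Aˣ) : A) := by
      rw [← MonoidHom.map_inv]; rfl
    show (((cU (g * h)⁻¹)⁻¹ : Aˣ) : A) = (((cU g⁻¹)⁻¹ : Aˣ) : A) * σ g (((cU h⁻¹)⁻¹ : Aˣ) : A)
    rw [hmul, mul_inv_rev, Units.val_mul, hwinv, conj g (((cU h⁻¹)⁻¹ : Aˣ) : A),
      mul_assoc, mul_assoc, Units.mul_inv, mul_one]
  · intro g a
    show σ' g a = (((cU g⁻¹)⁻¹ : Aˣ) : A) * σ g a * ((((cU g⁻¹)⁻¹)⁻¹ : Aˣ) : A)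
    rw [inv_inv]
    exact conj g a
end
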